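/- arXiv:1606.05391 — 3 statements merged into one kernel-verified Lean document; each statement's English description precedes it below -/
import Mathlib

section
/- If each link i (for i = 1, ..., N) must be scheduled at least once in every frame of δ_i consecutive slots, and at most one link can be scheduled per slot, then the service frequency constraints can only be satisfied if ∑_{i=1}^N 1/δ_i ≤ 1. Formally: if for each i there is a function s_i : ℕ → {0,1} with ∑_i s_i[t] ≤ 1 for all t, and for every i and every k, ∑_{t=kδ_i}^{(k+1)δ_i - 1} s_i[t] ≥ 1, then ∑_{i=1}^N 1/δ_i ≤ 1. -/
/-!
Fix a horizon `T` that is a multiple of every `δ i` (say their product). Within `[0, T)` link `i`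
meets `T / δ i` complete frames, so it is scheduled at least `T / δ i` times; since no slot serves
two links, `∑ i, T / δ i ≤ T`, and dividing by `T` gives the bound.
-/

open Finset

theorem nsmul_le_sum_range_mul_of_le_sum_Ico {M : Type*} [AddCommMonoid M] [PartialOrder M]
    [IsOrderedAddMonoid M] {f : ℕ → M} {d : ℕ} {a : M}
    (hframe : ∀ k, a ≤ ∑ t ∈ Ico (k * d) ((k + 1) * d), f t) (m : ℕ) :
    m • a ≤ ∑ t ∈ range (m * d), f t := by
  induction m with
  | zero => simp
  | succ m ih =>
    rw [← sum_range_add_sum_Ico f (Nat.mul_le_mul_right d m.le_succ), succ_nsmul]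
    exact add_le_add ih (hframe m)

theorem sum_sum_le_card_of_sum_le_one {ι : Type*} [Fintype ι] {s : ι → ℕ → ℕ}
    (hslot : ∀ t, ∑ i, s i t ≤ 1) (S : Finset ℕ) :
    ∑ i, ∑ t ∈ S, s i t ≤ #S :=
  calc ∑ i, ∑ t ∈ S, s i t = ∑ t ∈ S, ∑ i, s i t := sum_comm
    _ ≤ ∑ _t ∈ S, 1 := sum_le_sum fun t _ ↦ hslot t
    _ = #S := by simp

theorem sum_one_div_le_one_of_sum_div_le {ι : Type*} [Fintype ι] {d : ι → ℕ} {T : ℕ}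
    (hd : ∀ i, 0 < d i) (hT : 0 < T) (hdvd : ∀ i, d i ∣ T) (hsum : ∑ i, T / d i ≤ T) :
    ∑ i, (1 : ℝ) / d i ≤ 1 := by
  have hcast : ∀ i, (1 : ℝ) / d i = ((T / d i : ℕ) : ℝ) / T := fun i ↦ by
    rw [Nat.cast_div (hdvd i) (by exact_mod_cast (hd i).ne'), div_div_cancel_left' (by positivity)]
    exact one_div _
  rw [sum_congr rfl fun i _ ↦ hcast i, ← sum_div, div_le_one (by exact_mod_cast hT)]
  exact_mod_cast hsum

theorem stmt_0_general (N : ℕ) (δ : Fin N → ℕ) (hδ : ∀ i, 0 < δ i)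
    (s : Fin N → ℕ → ℕ)
    (hslot : ∀ t, ∑ i, s i t ≤ 1)
    (hfreq : ∀ (i : Fin N) (k : ℕ),
      1 ≤ ∑ t ∈ Finset.Ico (k * δ i) ((k + 1) * δ i), s i t) :
    ∑ i, (1 : ℝ) / (δ i : ℝ) ≤ 1 := by
  set T := ∏ i, δ i
  have hdvd : ∀ i, δ i ∣ T := fun i ↦ dvd_prod_of_mem δ (mem_univ i)
  have hserved : ∀ i, T / δ i ≤ ∑ t ∈ range T, s i t := fun i ↦ by
    simpa [Nat.div_mul_cancel (hdvd i)] using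
      nsmul_le_sum_range_mul_of_le_sum_Ico (hfreq i) (T / δ i)
  refine sum_one_div_le_one_of_sum_div_le hδ (prod_pos fun i _ ↦ hδ i) hdvd ?_
  calc ∑ i, T / δ i ≤ ∑ i, ∑ t ∈ range T, s i t := sum_le_sum fun i _ ↦ hserved i
    _ ≤ T := by simpa using sum_sum_le_card_of_sum_le_one hslot (range T)

/-- If each link `i` must be scheduled at least once in every frame of `δ i` consecutive
slots, and at most one link can be scheduled per slot, then `∑ 1/δ i ≤ 1`. -/
theorem stmt_0 (N : ℕ) (δ : Fin N → ℕ) (hδ : ∀ i, 0 < δ i)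
    (s : Fin N → ℕ → ℕ) (hs01 : ∀ i t, s i t ≤ 1)
    (hslot : ∀ t, ∑ i, s i t ≤ 1)
    (hfreq : ∀ (i : Fin N) (k : ℕ),
      1 ≤ ∑ t ∈ Finset.Ico (k * δ i) ((k + 1) * δ i), s i t) :
    ∑ i, (1 : ℝ) / (δ i : ℝ) ≤ 1 :=
  stmt_0_general N δ hδ s hslot hfreq
end

section
/- Let n be a positive integer and β > 0. The n-dimensional Lebesgue measure of the set S = {k ∈ ℝ^n : k_i ≥ 0 for all i} ∩ {k : ∑_{i=1}^n max(k_i - a_i, 0) < β}, where a_1, ..., a_n > 0, satisfies vol(S) = ∑_{T ⊆ {1,...,n}} (β^{|T|}/|T|!) · ∏_{j ∉ T} a_j. -/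
/-!
Fubini in the first coordinate: the slice of the region at `k₀ = x ≥ 0` is the region for the
remaining coordinates with budget `β - max (x - a₀) 0`, empty once `x ≥ a₀ + β`. Writing `V(β)`
for the volume of that lower-dimensional region, the range `0 ≤ x < a₀` contributes `a₀ V(β)` and
the range `a₀ ≤ x < a₀ + β` contributes `∫₀^β V(t) dt`. The subset sum obeys the same recursion:
a subset either omits the new index, which contributes the factor `a₀`, or contains it, which
turns `β^m/m!` into its antiderivative `β^(m+1)/(m+1)!`.
-/

open MeasureTheory Finset Nat

theorem sum_powerset_map {α β M : Type*} [AddCommMonoid M] (e : α ↪ β) (s : Finset α)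
    (f : Finset β → M) :
    ∑ T ∈ (s.map e).powerset, f T = ∑ T ∈ s.powerset, f (T.map e) := by
  classical
  rw [map_eq_image, powerset_image, sum_image]
  · simp [map_eq_image]
  · intro T _ U _ h
    exact image_injective e.injective h

noncomputable def excessVolume {ι : Type*} [DecidableEq ι] (a : ι → ℝ) (s : Finset ι) (β : ℝ) :
    ℝ :=
  ∑ T ∈ s.powerset, β ^ #T / (#T)! * ∏ j ∈ s \ T, a j

section
variable {ι : Type*} [DecidableEq ι] (a : ι → ℝ)

theorem excessVolume_map {κ : Type*} [DecidableEq κ] (e : κ ↪ ι) (s : Finset κ) (β : ℝ) :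
    excessVolume a (s.map e) β = excessVolume (a ∘ e) s β := by
  classical
  simp only [excessVolume, sum_powerset_map, card_map, ← Finset.map_sdiff, prod_map]
  rfl

theorem continuous_excessVolume (s : Finset ι) : Continuous (excessVolume a s) := by
  unfold excessVolume
  fun_prop

theorem excessVolume_nonneg {s : Finset ι} (ha : ∀ i ∈ s, 0 ≤ a i) {β : ℝ} (hβ : 0 ≤ β) :
    0 ≤ excessVolume a s β :=
  sum_nonneg fun T _ => mul_nonneg (by positivity)
    (prod_nonneg fun j hj => ha j (mem_sdiff.1 hj).1)

theorem integral_excessVolume (s : Finset ι) (β : ℝ) :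
    ∫ t in 0..β, excessVolume a s t =
      ∑ T ∈ s.powerset, β ^ (#T + 1) / (#T + 1)! * ∏ j ∈ s \ T, a j := by
  unfold excessVolume
  rw [intervalIntegral.integral_finsetSum fun T _ => by
    apply Continuous.intervalIntegrable; fun_prop]
  refine sum_congr rfl fun T _ => ?_
  simp only [intervalIntegral.integral_mul_const, intervalIntegral.integral_div, integral_pow,
    factorial_succ]
  push_cast
  field_simp
  ring

theorem excessVolume_insert {i : ι} {s : Finset ι} (hi : i ∉ s) (β : ℝ) :
    excessVolume a (insert i s) β =
      a i * excessVolume a s β + ∫ t in 0..β, excessVolume a s t := by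
  rw [integral_excessVolume, excessVolume, sum_powerset_insert hi, excessVolume, mul_sum]
  congr 1 <;> refine sum_congr rfl fun T hT => ?_
  · have hiT : i ∉ T := fun h => hi (mem_powerset.1 hT h)
    rw [insert_sdiff_of_notMem _ hiT, prod_insert (fun h => hi (mem_sdiff.1 h).1)]
    ring
  · have hiT : i ∉ T := fun h => hi (mem_powerset.1 hT h)
    rw [card_insert_of_notMem hiT, insert_sdiff_insert, sdiff_insert_of_notMem hi]

theorem excessVolume_cons {n : ℕ} (c : ℝ) (a : Fin n → ℝ) (β : ℝ) :
    excessVolume (Fin.cons c a : Fin (n + 1) → ℝ) univ β =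
      c * excessVolume a univ β + ∫ t in 0..β, excessVolume a univ t := by
  rw [Fin.univ_succ, cons_eq_insert, excessVolume_insert _ (by simp)]
  simp only [excessVolume_map, Fin.cons_zero, Function.Embedding.coeFn_mk, Fin.cons_comp_succ]

end

theorem integral_comp_sub_max_sub {f : ℝ → ℝ} (hf : Continuous f) {c β : ℝ} (hc : 0 ≤ c)
    (hβ : 0 ≤ β) :
    ∫ x in 0..c + β, f (β - max (x - c) 0) = c * f β + ∫ t in 0..β, f t := by
  have hint : ∀ u v : ℝ, IntervalIntegrable (fun x => f (β - max (x - c) 0)) volume u v :=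
    fun u v => Continuous.intervalIntegrable (by fun_prop) u v
  rw [← intervalIntegral.integral_add_adjacent_intervals (hint 0 c) (hint c (c + β))]
  congr 1
  · rw [intervalIntegral.integral_congr (g := fun _ => f β), intervalIntegral.integral_const,
      sub_zero, smul_eq_mul]
    intro x hx
    rw [Set.uIcc_of_le hc] at hx
    simp [max_eq_right (sub_nonpos.2 hx.2)]
  · rw [intervalIntegral.integral_congr (g := fun x => f (c + β - x)),
      intervalIntegral.integral_comp_sub_left, sub_self, add_sub_cancel_left]
    intro x hx
    rw [Set.uIcc_of_le (by linarith)] at hx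
    simp only [max_eq_left (sub_nonneg.2 hx.1)]
    ring_nf

def excessRegion {ι : Type*} [Fintype ι] (a : ι → ℝ) (β : ℝ) : Set (ι → ℝ) :=
  {k | (∀ i, 0 ≤ k i) ∧ ∑ i, max (k i - a i) 0 < β}

section
variable {ι : Type*} [Fintype ι] (a : ι → ℝ)

theorem measurableSet_excessRegion (β : ℝ) : MeasurableSet (excessRegion a β) := by
  unfold excessRegion
  measurability

theorem excessRegion_eq_empty {β : ℝ} (hβ : β ≤ 0) : excessRegion a β = ∅ :=
  Set.eq_empty_of_forall_notMem fun _ hk =>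
    hk.2.not_ge (hβ.trans (sum_nonneg fun _ _ => le_max_right _ _))

end

theorem volume_excessRegion_cons {n : ℕ} (c : ℝ) (a : Fin n → ℝ) (β : ℝ) :
    volume (excessRegion (Fin.cons c a : Fin (n + 1) → ℝ) β) =
      ∫⁻ x in Set.Ici 0, volume (excessRegion a (β - max (x - c) 0)) := by
  have hcons := (volume_preserving_piFinSuccAbove (fun _ : Fin (n + 1) => ℝ) 0).symm
  rw [← hcons.measure_preimage (measurableSet_excessRegion _ _).nullMeasurableSet,
    Measure.volume_eq_prod, Measure.prod_apply (hcons.measurable (measurableSet_excessRegion _ _)),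
    ← lintegral_indicator measurableSet_Ici]
  congr 1 with x
  by_cases hx : 0 ≤ x
  · simp only [Set.indicator_of_mem (Set.mem_Ici.2 hx)]
    congr 1 with y
    simp [hx, excessRegion, MeasurableEquiv.piFinSuccAbove_symm_apply, Fin.insertNthEquiv_zero,
      Fin.forall_fin_succ, Fin.sum_univ_succ, lt_sub_iff_add_lt']
  · simp [hx, excessRegion, MeasurableEquiv.piFinSuccAbove_symm_apply, Fin.insertNthEquiv_zero,
      Fin.forall_fin_succ]

theorem volume_excessRegion {n : ℕ} (a : Fin n → ℝ) (ha : ∀ i, 0 ≤ a i) {β : ℝ} (hβ : 0 < β) :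
    volume (excessRegion a β) = ENNReal.ofReal (excessVolume a univ β) := by
  induction n generalizing β with
  | zero =>
    have : excessRegion a β = Set.univ := by ext k; simp [excessRegion, hβ]
    simp [this, excessVolume, volume_pi]
  | succ n ih =>
    obtain ⟨c, a, rfl⟩ := Fin.exists_cons a
    have hc : 0 ≤ c := by simpa using ha 0
    have ha' : ∀ i, 0 ≤ a i := fun i => by simpa using ha i.succ
    set f := excessVolume a univ
    have hf : Continuous f := continuous_excessVolume a univ
    have hslice : ∀ x ∈ Set.Ici (0 : ℝ), volume (excessRegion a (β - max (x - c) 0)) =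
        (Set.Iio (c + β)).indicator (fun x => ENNReal.ofReal (f (β - max (x - c) 0))) x := by
      intro x _
      by_cases hx : x < c + β
      · rw [Set.indicator_of_mem (Set.mem_Iio.2 hx),
          ih a ha' (sub_pos.2 (max_lt (by linarith) hβ))]
      · rw [Set.indicator_of_notMem (mt Set.mem_Iio.1 hx),
          excessRegion_eq_empty _ (sub_nonpos.2 (le_max_of_le_left (by linarith))), measure_empty]
    rw [volume_excessRegion_cons, setLIntegral_congr_fun measurableSet_Ici hslice,
      setLIntegral_indicator measurableSet_Iio, Set.inter_comm, Set.Ici_inter_Iio,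
      restrict_Ico_eq_restrict_Ioc,
      ← ofReal_integral_eq_lintegral_ofReal, ← intervalIntegral.integral_of_le (by linarith),
      integral_comp_sub_max_sub hf hc hβ.le, excessVolume_cons]
    · exact (Continuous.integrableOn_Icc (by fun_prop)).mono_set Set.Ioc_subset_Icc_self
    · filter_upwards [ae_restrict_mem measurableSet_Ioc] with x hx
      exact excessVolume_nonneg _ (fun i _ => ha' i)
        (sub_nonneg.2 (max_le (by linarith [hx.2]) hβ.le))

theorem stmt_4_general (n : ℕ) (β : ℝ) (hβ : 0 < β)
    (a : Fin n → ℝ) (ha : ∀ i, 0 < a i) :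
    volume {k : Fin n → ℝ | (∀ i, 0 ≤ k i) ∧ ∑ i, max (k i - a i) 0 < β} =
      ∑ T : Finset (Fin n),
        ENNReal.ofReal (β ^ T.card / (Nat.factorial T.card) * ∏ j ∈ Tᶜ, a j) := by
  have ha' : ∀ i, 0 ≤ a i := fun i => (ha i).le
  rw [← excessRegion, volume_excessRegion a ha' hβ, excessVolume, ENNReal.ofReal_sum_of_nonneg,
    powerset_univ]
  · simp_rw [compl_eq_univ_sdiff]
  · exact fun T _ => mul_nonneg (by positivity) (prod_nonneg fun j _ => ha' j)

/-- Volume of `{k ≥ 0 : ∑ max (k i - a i) 0 < β}` equals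
`∑_{T ⊆ [n]} (β^|T|/|T|!) ∏_{j ∉ T} a j`. -/
theorem stmt_4 (n : ℕ) (hn : 0 < n) (β : ℝ) (hβ : 0 < β)
    (a : Fin n → ℝ) (ha : ∀ i, 0 < a i) :
    volume {k : Fin n → ℝ | (∀ i, 0 ≤ k i) ∧ ∑ i, max (k i - a i) 0 < β} =
      ∑ T : Finset (Fin n),
        ENNReal.ofReal (β ^ T.card / (Nat.factorial T.card) * ∏ j ∈ Tᶜ, a j) :=
  stmt_4_general n β hβ a ha
end

section
/- Let δ_1, ..., δ_N be positive integers with ∑_{i=1}^N 1/δ_i ≤ 1. Consider the schedule produced by always, in each slot t, serving among links not yet served in their current frame (link i's frames are [k·δ_i, (k+1)·δ_i) for k ∈ ℕ) one whose remaining time-to-frame-end, δ_i - (t mod δ_i), is minimal (serving an arbitrary link if all have been served in their current frames). Then under this earliest-deadline-style policy every link i is served at least once in each of its frames. -/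
/-- Link `i` has not yet been served (by schedule `s`) in its current frame at slot `t`:
no slot `t'` with `t' < t` in the same frame `[k·δ i, (k+1)·δ i)` as `t` served it. -/
def Unserved {N : ℕ} (δ : Fin N → ℕ) (s : ℕ → Fin N) (i : Fin N) (t : ℕ) : Prop :=
  ¬ ∃ t', (t / δ i) * δ i ≤ t' ∧ t' < t ∧ s t' = i

/-- Earliest-deadline-style property of MSMW: whenever some link is unserved in its
current frame, the slot serves an unserved link whose remaining time to its frame end,
`δ i - (t mod δ i)`, is minimal among unserved links. -/
def EDFPolicy {N : ℕ} (δ : Fin N → ℕ) (s : ℕ → Fin N) : Prop :=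
  ∀ t, (∃ i, Unserved δ s i t) →
    Unserved δ s (s t) t ∧
      ∀ j, Unserved δ s j t → δ (s t) - t % δ (s t) ≤ δ j - t % δ j

open Finset

/-!
Earliest-deadline-first argument. Suppose link `i` misses its `k`-th frame, ending at
`D = (k + 1) δᵢ`. Throughout that frame `i` is pending, so every slot serves a pending job
due by `D`; extend this run of slots backwards to a maximal interval `[t₀, D)`. By
maximality, every job served in `[t₀, D)` was released at or after `t₀`, and it is
served there only once. Hence the `D - t₀` slots inject into the jobs whose whole frame
lies in `[t₀, D)`, except the missed job of `i`. But there are at most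
`∑ⱼ (D - t₀) / δⱼ ≤ D - t₀` such jobs, a contradiction.
-/

theorem exists_run_start (P : ℕ → Prop) {a b : ℕ} (h : ∀ t, a ≤ t → t < b → P t) :
    ∃ t₀ ≤ a, (∀ t, t₀ ≤ t → t < b → P t) ∧ ∀ t, t + 1 = t₀ → ¬ P t := by
  classical
  have hex : ∃ t₀, t₀ ≤ a ∧ ∀ t, t₀ ≤ t → t < b → P t := ⟨a, le_rfl, h⟩
  obtain ⟨ha, hrun⟩ := Nat.find_spec hex
  refine ⟨Nat.find hex, ha, hrun, fun t ht hPt => ?_⟩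
  refine Nat.find_min hex (show t < Nat.find hex by omega) ⟨by omega, fun u hu hub => ?_⟩
  rcases hu.eq_or_lt with rfl | hlt
  · exact hPt
  · exact hrun u (by omega) hub

theorem div_eq_div_of_div_mul_le_of_le {d t u : ℕ} (hd : 0 < d) (hu : t / d * d ≤ u)
    (hut : u ≤ t) : u / d = t / d :=
  le_antisymm (Nat.div_le_div_right hut) ((Nat.le_div_iff_mul_le hd).2 hu)

theorem card_Ico_ceilDiv_div_mul_le (d a b : ℕ) : #(Ico (a ⌈/⌉ d) (b / d)) * d ≤ b - a := by
  rcases d.eq_zero_or_pos with rfl | hd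
  · simp
  rw [Nat.card_Ico, Nat.sub_mul]
  have hb := Nat.div_mul_le_self b d
  have ha : a ≤ a ⌈/⌉ d * d := mul_comm d (a ⌈/⌉ d) ▸ le_smul_ceilDiv hd
  omega

section Schedule

variable {N : ℕ} (δ : Fin N → ℕ) (s : ℕ → Fin N)

def frameEnd (j : Fin N) (t : ℕ) : ℕ := (t / δ j + 1) * δ j

theorem frameEnd_eq_add {j : Fin N} (hj : 0 < δ j) (t : ℕ) :
    frameEnd δ j t = t + (δ j - t % δ j) := by
  have h₁ := Nat.div_add_mod t (δ j)
  have h₂ := Nat.mod_lt t hj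
  rw [frameEnd, add_one_mul, mul_comm]
  omega

theorem frameEnd_of_mem_frame {j : Fin N} {k t : ℕ} (h₁ : k * δ j ≤ t) (h₂ : t < (k + 1) * δ j) :
    frameEnd δ j t = (k + 1) * δ j := by
  rw [frameEnd, Nat.div_eq_of_lt_le h₁ h₂]

theorem Unserved.of_le {j : Fin N} {t u : ℕ} (hj : 0 < δ j) (h : Unserved δ s j t)
    (hu : t / δ j * δ j ≤ u) (hut : u ≤ t) : Unserved δ s j u := by
  rintro ⟨t', h₁, h₂, h₃⟩
  rw [div_eq_div_of_div_mul_le_of_le hj hu hut] at h₁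
  exact h ⟨t', h₁, h₂.trans_le hut, h₃⟩

theorem unserved_of_not_served {j : Fin N} {k t : ℕ}
    (hmiss : ∀ t', k * δ j ≤ t' → t' < (k + 1) * δ j → s t' ≠ j)
    (h₁ : k * δ j ≤ t) (h₂ : t < (k + 1) * δ j) : Unserved δ s j t := by
  rintro ⟨t', h₁', h₂', h₃'⟩
  rw [Nat.div_eq_of_lt_le h₁ h₂] at h₁'
  exact hmiss t' h₁' (h₂'.trans h₂) h₃'

/-- Slot `t` serves a link that is pending at `t` and whose current frame ends by `D`. -/
def ServesPendingBy (D t : ℕ) : Prop :=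
  Unserved δ s (s t) t ∧ frameEnd δ (s t) t ≤ D

theorem EDFPolicy.servesPendingBy (hpol : EDFPolicy δ s) (hδ : ∀ j, 0 < δ j) {j : Fin N}
    {t : ℕ} (hj : Unserved δ s j t) : ServesPendingBy δ s (frameEnd δ j t) t := by
  obtain ⟨hserved, hmin⟩ := hpol t ⟨j, hj⟩
  refine ⟨hserved, ?_⟩
  rw [frameEnd_eq_add δ (hδ _), frameEnd_eq_add δ (hδ _)]
  have := hmin j hj
  omega

def servedJob (t : ℕ) : (_ : Fin N) × ℕ := ⟨s t, t / δ (s t)⟩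

theorem servedJob_eq_mk_iff {t : ℕ} {j : Fin N} {m : ℕ} :
    servedJob δ s t = ⟨j, m⟩ ↔ s t = j ∧ t / δ j = m := by
  constructor
  · intro h
    simp only [servedJob, Sigma.mk.injEq] at h
    obtain ⟨rfl, h⟩ := h
    exact ⟨rfl, eq_of_heq h⟩
  · rintro ⟨rfl, rfl⟩
    rfl

theorem servedJob_injOn {S : Set ℕ} (h : ∀ t ∈ S, Unserved δ s (s t) t) :
    Set.InjOn (servedJob δ s) S := by
  suffices ∀ t₁ t₂, t₁ < t₂ → Unserved δ s (s t₂) t₂ → servedJob δ s t₁ ≠ servedJob δ s t₂ by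
    intro t₁ h₁ t₂ h₂ heq
    by_contra hne
    rcases Nat.lt_or_gt_of_ne hne with hlt | hlt
    · exact this _ _ hlt (h t₂ h₂) heq
    · exact this _ _ hlt (h t₁ h₁) heq.symm
  intro t₁ t₂ hlt hpending heq
  obtain ⟨hs, hm⟩ := (servedJob_eq_mk_iff δ s).1 heq
  exact hpending ⟨t₁, hm ▸ hs ▸ Nat.div_mul_le_self _ _, hlt, hs⟩

/-- Jobs whose whole frame `[m δⱼ, (m + 1) δⱼ)` lies in `[a, b)`. -/
def jobsWithin (a b : ℕ) : Finset ((_ : Fin N) × ℕ) :=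
  univ.sigma fun j => Ico (a ⌈/⌉ δ j) (b / δ j)

theorem mem_jobsWithin {j : Fin N} {m a b : ℕ} (hj : 0 < δ j) :
    ⟨j, m⟩ ∈ jobsWithin δ a b ↔ a ≤ m * δ j ∧ (m + 1) * δ j ≤ b := by
  rw [jobsWithin, mem_sigma, mem_Ico, ceilDiv_le_iff_le_mul hj, ← Nat.succ_le_iff,
    Nat.le_div_iff_mul_le hj, mul_comm (δ j)]
  simp

theorem card_jobsWithin_le (hδ : ∀ j, 0 < δ j) (h : ∑ j, (1 : ℝ) / δ j ≤ 1) (a b : ℕ) :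
    #(jobsWithin δ a b) ≤ b - a := by
  have hframes (j : Fin N) : (#(Ico (a ⌈/⌉ δ j) (b / δ j)) : ℝ) ≤ (b - a : ℕ) * (1 / δ j) := by
    rw [mul_one_div, le_div_iff₀ (by exact_mod_cast hδ j)]
    exact_mod_cast card_Ico_ceilDiv_div_mul_le (δ j) a b
  have : (#(jobsWithin δ a b) : ℝ) ≤ (b - a : ℕ) := calc
    _ = ∑ j, (#(Ico (a ⌈/⌉ δ j) (b / δ j)) : ℝ) := by rw [jobsWithin, card_sigma]; push_cast; rfl
    _ ≤ ∑ j, ((b - a : ℕ) : ℝ) * (1 / δ j) := sum_le_sum fun j _ => hframes j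
    _ = (b - a : ℕ) * ∑ j, (1 : ℝ) / δ j := by rw [mul_sum]
    _ ≤ (b - a : ℕ) := mul_le_of_le_one_right (by positivity) h
  exact_mod_cast this

theorem EDFPolicy.servedJob_mem_jobsWithin (hpol : EDFPolicy δ s) (hδ : ∀ j, 0 < δ j)
    {t₀ D t : ℕ} (hrun : ∀ t, t₀ ≤ t → t < D → ServesPendingBy δ s D t)
    (hstart : ∀ t, t + 1 = t₀ → ¬ ServesPendingBy δ s D t) (h₁ : t₀ ≤ t) (h₂ : t < D) :
    servedJob δ s t ∈ jobsWithin δ t₀ D := by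
  obtain ⟨hpending, hdue⟩ := hrun t h₁ h₂
  refine (mem_jobsWithin δ (hδ _)).2 ⟨?_, hdue⟩
  by_contra! hearly
  -- the job served at `t` is already pending at `t₀ - 1`, which therefore also serves a job due by `D`
  have hframe : t / δ (s t) * δ (s t) ≤ t₀ - 1 := by omega
  have hsame : t₀ - 1 ≤ t := by omega
  apply hstart (t₀ - 1) (by omega)
  have hdue' : frameEnd δ (s t) (t₀ - 1) ≤ D := by
    rwa [frameEnd, div_eq_div_of_div_mul_le_of_le (hδ _) hframe hsame]
  obtain ⟨hserved, hle⟩ := hpol.servesPendingBy δ s hδ (hpending.of_le δ s (hδ _) hframe hsame)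
  exact ⟨hserved, hle.trans hdue'⟩

end Schedule

theorem stmt_13_general (N : ℕ) (δ : Fin N → ℕ) (hδ : ∀ i, 0 < δ i)
    (h : ∑ i, (1 : ℝ) / (δ i : ℝ) ≤ 1)
    (s : ℕ → Fin N) (hpol : EDFPolicy δ s) :
    ∀ (i : Fin N) (k : ℕ), ∃ t, k * δ i ≤ t ∧ t < (k + 1) * δ i ∧ s t = i := by
  intro i k
  by_contra! hmiss
  set D := (k + 1) * δ i with hD
  have hbusy (t : ℕ) (h₁ : k * δ i ≤ t) (h₂ : t < D) : ServesPendingBy δ s D t := by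
    simpa only [frameEnd_of_mem_frame δ h₁ h₂]
      using hpol.servesPendingBy δ s hδ (unserved_of_not_served δ s hmiss h₁ h₂)
  obtain ⟨t₀, ht₀, hrun, hstart⟩ := exists_run_start _ hbusy
  have hmaps : Set.MapsTo (servedJob δ s) (Ico t₀ D) ((jobsWithin δ t₀ D).erase ⟨i, k⟩) := by
    intro t ht
    obtain ⟨h₁, h₂⟩ := mem_Ico.1 ht
    refine mem_erase.2 ⟨fun heq => ?_, hpol.servedJob_mem_jobsWithin δ s hδ hrun hstart h₁ h₂⟩
    obtain ⟨hs, hm⟩ := (servedJob_eq_mk_iff δ s).1 heq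
    exact hmiss t (hm ▸ Nat.div_mul_le_self t _) h₂ hs
  have hcount := card_le_card_of_injOn _ hmaps
    (servedJob_injOn δ s fun t ht => (hrun t (mem_Ico.1 ht).1 (mem_Ico.1 ht).2).1)
  have hik : ⟨i, k⟩ ∈ jobsWithin δ t₀ D := (mem_jobsWithin δ (hδ i)).2 ⟨ht₀, le_rfl⟩
  rw [Nat.card_Ico, card_erase_of_mem hik] at hcount
  have hjobs := card_jobsWithin_le δ hδ h t₀ D
  have hjobs_pos := card_pos.2 ⟨_, hik⟩
  have hframe : k * δ i < D := by rw [hD, add_one_mul]; exact Nat.lt_add_of_pos_right (hδ i)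
  omega

/-- Lemma 2: if `∑ 1/δ i ≤ 1`, then under the earliest-deadline-style policy every
link `i` is served at least once in each of its frames `[k·δ i, (k+1)·δ i)`. -/
theorem stmt_13 (N : ℕ) (hN : 0 < N) (δ : Fin N → ℕ) (hδ : ∀ i, 0 < δ i)
    (h : ∑ i, (1 : ℝ) / (δ i : ℝ) ≤ 1)
    (s : ℕ → Fin N) (hpol : EDFPolicy δ s) :
    ∀ (i : Fin N) (k : ℕ), ∃ t, k * δ i ≤ t ∧ t < (k + 1) * δ i ∧ s t = i :=
  stmt_13_general N δ hδ h s hpol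
end
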